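/- PSL(2,ℤ) acts simply transitively on the set of oriented edges of the Farey tesselation; equivalently, the map PSL(2,ℤ) → {(x,y) : x,y ∈ ℚ ∪ {∞}, x,y span a Farey edge} sending A = [[a,b],[c,d]] to the ordered pair (-b/a, -d/c) is a bijection. -/

import Mathlib

/-!
The rows of `A = [[a,b],[c,d]] ∈ SL(2,ℤ)` are coprime and `(-b)c - a(-d) = det A = 1`, so
`(-b/a, -d/c)` is an oriented Farey edge. The normalized point `-b/a` recovers the row `(a, b)`
up to sign, and `-d/c` the row `(c, d)`; the determinant forces the two signs to agree, so the
pair determines `A` up to `±1`. Conversely, an edge `(p/q, r/s)` with `ε = p s - q r = ±1` is the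
image of `[[q, -p], [ε s, -ε r]]`, whose determinant is `ε² = 1`.
-/

instance : Fact (Even (Fintype.card (Fin 2))) := ⟨by decide⟩

/-- Normalize an integer fraction `p/q` (with `(p,q) ≠ (0,0)`) to lowest-terms-sign form:
denominator positive, or denominator zero and numerator positive (the point `∞ = 1/0`). -/
def fracNorm (p q : ℤ) : ℤ × ℤ :=
  if 0 < q ∨ (q = 0 ∧ 0 < p) then (p, q) else (-p, -q)

/-- The pair of extended rationals `(-b/a, -d/c)` (in normalized form) associated to
`A = [[a,b],[c,d]] ∈ SL(2,ℤ)`, the endpoints of the oriented Farey edge `e_A`. -/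
def fareyPair (A : Matrix.SpecialLinearGroup (Fin 2) ℤ) : (ℤ × ℤ) × (ℤ × ℤ) :=
  (fracNorm (-A.1 0 1) (A.1 0 0), fracNorm (-A.1 1 1) (A.1 1 0))

/-- An ordered pair of normalized extended rationals spanning an oriented Farey edge. -/
def IsOrientedFareyEdge (x : (ℤ × ℤ) × (ℤ × ℤ)) : Prop :=
  Int.gcd x.1.1 x.1.2 = 1 ∧ Int.gcd x.2.1 x.2.2 = 1 ∧
    (0 < x.1.2 ∨ (x.1.2 = 0 ∧ 0 < x.1.1)) ∧ (0 < x.2.2 ∨ (x.2.2 = 0 ∧ 0 < x.2.1)) ∧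
    |x.1.1 * x.2.2 - x.1.2 * x.2.1| = 1

open Matrix

section FracNorm

theorem fracNorm_eq_or (p q : ℤ) : fracNorm p q = (p, q) ∨ fracNorm p q = (-p, -q) := by
  unfold fracNorm; split_ifs <;> simp

theorem fracNorm_of_normalized {p q : ℤ} (h : 0 < q ∨ (q = 0 ∧ 0 < p)) :
    fracNorm p q = (p, q) :=
  if_pos h

theorem fracNorm_neg_neg (p q : ℤ) : fracNorm (-p) (-q) = fracNorm p q := by
  unfold fracNorm; split_ifs <;> simp_all [Prod.ext_iff] <;> omega

theorem fracNorm_mul_of_isUnit {u : ℤ} (hu : IsUnit u) (p q : ℤ) :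
    fracNorm (u * p) (u * q) = fracNorm p q := by
  rcases Int.isUnit_iff.mp hu with rfl | rfl <;> simp [fracNorm_neg_neg]

theorem fracNorm_eq_fracNorm_iff {p q p' q' : ℤ} :
    fracNorm p q = fracNorm p' q' ↔ (p' = p ∧ q' = q) ∨ (p' = -p ∧ q' = -q) := by
  constructor
  · intro h
    rcases fracNorm_eq_or p q with h₁ | h₁ <;> rcases fracNorm_eq_or p' q' with h₂ | h₂ <;>
      simp only [h₁, h₂, Prod.ext_iff] at h <;> omega
  · rintro (⟨rfl, rfl⟩ | ⟨rfl, rfl⟩)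
    · rfl
    · exact (fracNorm_neg_neg p q).symm

theorem fracNorm_normalized {p q : ℤ} (h : p ≠ 0 ∨ q ≠ 0) :
    0 < (fracNorm p q).2 ∨ ((fracNorm p q).2 = 0 ∧ 0 < (fracNorm p q).1) := by
  unfold fracNorm; split_ifs <;> simp <;> omega

theorem gcd_fracNorm (p q : ℤ) : Int.gcd (fracNorm p q).1 (fracNorm p q).2 = Int.gcd p q := by
  rcases fracNorm_eq_or p q with h | h <;> simp [h, Int.gcd_neg, Int.neg_gcd]

theorem abs_cross_fracNorm (p q r s : ℤ) :
    |(fracNorm p q).1 * (fracNorm r s).2 - (fracNorm p q).2 * (fracNorm r s).1| =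
      |p * s - q * r| := by
  rw [abs_eq_abs]
  rcases fracNorm_eq_or p q with h | h <;> rcases fracNorm_eq_or r s with h' | h' <;>
    rw [h, h'] <;> first | exact .inl (by ring1) | exact .inr (by ring1)

end FracNorm

section FareyPair

open scoped MatrixGroups

theorem Matrix.SpecialLinearGroup.fin_two_det {R : Type*} [CommRing R] (A : SL(2, R)) :
    A 0 0 * A 1 1 - A 0 1 * A 1 0 = 1 := by
  rw [← det_fin_two, A.det_coe]

theorem isOrientedFareyEdge_fareyPair (A : SL(2, ℤ)) : IsOrientedFareyEdge (fareyPair A) := by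
  have h₀ : IsCoprime (-A 0 1) (A 0 0) := (A.isCoprime_row 0).symm.neg_left
  have h₁ : IsCoprime (-A 1 1) (A 1 0) := (A.isCoprime_row 1).symm.neg_left
  refine ⟨?_, ?_, fracNorm_normalized h₀.ne_zero_or_ne_zero,
    fracNorm_normalized h₁.ne_zero_or_ne_zero, ?_⟩
  · exact (gcd_fracNorm _ _).trans (Int.isCoprime_iff_gcd_eq_one.mp h₀)
  · exact (gcd_fracNorm _ _).trans (Int.isCoprime_iff_gcd_eq_one.mp h₁)
  · have hcross : -A 0 1 * A 1 0 - A 0 0 * -A 1 1 = 1 := by linear_combination A.fin_two_det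
    rw [fareyPair, abs_cross_fracNorm, hcross, abs_one]

theorem fareyPair_neg (A : SL(2, ℤ)) : fareyPair (-A) = fareyPair A := by
  simp only [fareyPair, SpecialLinearGroup.coe_neg, neg_apply, fracNorm_neg_neg]

theorem fareyPair_eq_fareyPair_iff (A B : SL(2, ℤ)) :
    fareyPair A = fareyPair B ↔ A = B ∨ A = -B := by
  refine ⟨fun h ↦ ?_, by rintro (rfl | rfl) <;> simp [fareyPair_neg]⟩
  simp only [fareyPair, Prod.mk.injEq, fracNorm_eq_fracNorm_iff, neg_inj] at h
  have hA := A.fin_two_det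
  have hB := B.fin_two_det
  rcases h with ⟨⟨hb, ha⟩ | ⟨hb, ha⟩, ⟨hd, hc⟩ | ⟨hd, hc⟩⟩
  · left
    ext i j
    fin_cases i <;> fin_cases j <;> simp [*]
  · rw [ha, hb, hc, hd] at hB; linarith
  · rw [ha, hb, hc, hd] at hB; linarith
  · right
    ext i j
    fin_cases i <;> fin_cases j <;> simp [SpecialLinearGroup.coe_neg, *]

theorem exists_fareyPair_eq {x : (ℤ × ℤ) × (ℤ × ℤ)} (hx : IsOrientedFareyEdge x) :
    ∃ A : SL(2, ℤ), fareyPair A = x := by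
  obtain ⟨⟨p, q⟩, r, s⟩ := x
  obtain ⟨-, -, hpq, hrs, hcross⟩ := hx
  dsimp only at hpq hrs hcross
  set ε := p * s - q * r
  have hε : IsUnit ε := Int.isUnit_iff_abs_eq.mpr hcross
  have hdet : (!![q, -p; ε * s, -(ε * r)]).det = 1 := by
    rw [det_fin_two_of, ← Int.isUnit_mul_self hε]
    ring
  refine ⟨⟨_, hdet⟩, ?_⟩
  simp only [fareyPair, of_apply, cons_val', cons_val_zero,
    cons_val_one, empty_val', cons_val_fin_one, neg_neg, fracNorm_mul_of_isUnit hε,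
    fracNorm_of_normalized hpq, fracNorm_of_normalized hrs]

end FareyPair

/-- `PSL(2,ℤ)` acts simply transitively on oriented Farey edges: the map
`A ↦ (-b/a, -d/c)` lands in the oriented Farey edges, two matrices have the same image iff
they agree up to sign (so the map descends to an injection of `PSL(2,ℤ)`), and every
oriented Farey edge arises; i.e. the induced map on `PSL(2,ℤ)` is a bijection. -/
theorem stmt19 :
    (∀ A : Matrix.SpecialLinearGroup (Fin 2) ℤ, IsOrientedFareyEdge (fareyPair A)) ∧
    (∀ A B : Matrix.SpecialLinearGroup (Fin 2) ℤ,
      fareyPair A = fareyPair B ↔ (A = B ∨ A = -B)) ∧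
    (∀ x : (ℤ × ℤ) × (ℤ × ℤ), IsOrientedFareyEdge x →
      ∃ A : Matrix.SpecialLinearGroup (Fin 2) ℤ, fareyPair A = x) :=
  ⟨isOrientedFareyEdge_fareyPair, fareyPair_eq_fareyPair_iff, fun _ ↦ exists_fareyPair_eq⟩
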